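/- Let d and r be positive integers and k ∈ ℤ_{++}^{r} (with the convention k_{r+1} := 0). Then: (a) in ℂ[X], the polynomial ∏_{1≤i<j≤r+1}(X − 1 − d(i+j−3)/2)_{k_i+k_j} divides the polynomial ∏_{1≤i≤j≤r}(X − 1 − d(i+j−2)/2)_{k_i+k_j}; let R ∈ ℂ[X] denote the quotient, so that C̃^d(ν,k) = R(ν). (b) If in addition 1 ≤ m₁ ≤ m₂ ≤ r, k₁ = ⋯ = k_{m₁}, and k_{m₂+1} = 0, then: if k₁ ≥ 1, every zero ν ∈ ℂ of R is real and satisfies (d/2)(m₁−1) − 2k₁ + 2 ≤ ν ≤ d(m₂−1) − k_{m₂} + 1; and if k₁ = 0 then R is the constant polynomial 1. (c) In particular, for m = 0, 1, …, r−1, if k_{m+1} = 0, then R(λ+μ) ≠ 0 for all real λ, μ with λ ≥ dm/2 and μ ≥ dm/2. -/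

import Mathlib

/-!
Write `c i j = 1 + d(i+j-2)/2`. Shifting `j ↦ j + 1` turns the denominator into
`∏_{1≤i≤j≤r} (X - c i j)_{k_i+k_{j+1}}`, so it matches the numerator factor by factor, and as `k` is
antitone with `k_{r+1} = 0`, each numerator factor `(X - c i j)_{k_i+k_j}` is the denominator
factor times the linear factors `X - c i j + t` for `k_i + k_{j+1} ≤ t < k_i + k_j`. Hence the zeros
of the quotient are the real numbers `c i j - t`, and only indices with `k_{j+1} < k_j` contribute;
the hypotheses on `m₁`, `m₂` force such `j` into `[m₁, m₂]`, which gives the bounds.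
-/

open Polynomial Finset

/-- `(X - c)_m := ∏_{t=0}^{m-1} (X - c + t)` in `ℂ[X]`. -/
noncomputable def pochPoly (c : ℂ) (m : ℕ) : Polynomial ℂ :=
  ∏ t ∈ Finset.range m, (Polynomial.X - Polynomial.C c + (t : Polynomial ℂ))

/-- The numerator `∏_{1≤i≤j≤r}(X − 1 − d(i+j−2)/2)_{k_i+k_j}` of `C̃^d`. -/
noncomputable def numerT (d r : ℕ) (k : ℕ → ℕ) : Polynomial ℂ :=
  ∏ i ∈ Finset.Icc 1 r, ∏ j ∈ Finset.Icc i r,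
    pochPoly (1 + (d : ℂ) * ((i : ℂ) + (j : ℂ) - 2) / 2) (k i + k j)

/-- The denominator `∏_{1≤i<j≤r+1}(X − 1 − d(i+j−3)/2)_{k_i+k_j}` of `C̃^d`. -/
noncomputable def denomT (d r : ℕ) (k : ℕ → ℕ) : Polynomial ℂ :=
  ∏ i ∈ Finset.Icc 1 (r + 1), ∏ j ∈ Finset.Icc (i + 1) (r + 1),
    pochPoly (1 + (d : ℂ) * ((i : ℂ) + (j : ℂ) - 3) / 2) (k i + k j)

noncomputable def pochPolyIco (c : ℂ) (a b : ℕ) : ℂ[X] :=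
  ∏ t ∈ Ico a b, (X - C c + (t : ℂ[X]))

lemma pochPoly_mul_pochPolyIco (c : ℂ) {a b : ℕ} (hab : a ≤ b) :
    pochPoly c a * pochPolyIco c a b = pochPoly c b := by
  simp only [pochPoly, pochPolyIco, range_eq_Ico]
  exact prod_Ico_consecutive _ (Nat.zero_le a) hab

lemma isRoot_pochPolyIco_iff {c z : ℂ} {a b : ℕ} :
    (pochPolyIco c a b).IsRoot z ↔ ∃ t ∈ Ico a b, z = c - t := by
  simp only [pochPolyIco, IsRoot.def, eval_prod, prod_eq_zero_iff, eval_add, eval_sub, eval_X,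
    eval_C, eval_natCast]
  refine exists_congr fun t => and_congr_right fun _ => ?_
  constructor <;> intro h <;> linear_combination h

lemma pochPolyIco_self (c : ℂ) (a : ℕ) : pochPolyIco c a a = 1 := by
  simp [pochPolyIco]

lemma pochPoly_monic (c : ℂ) (m : ℕ) : (pochPoly c m).Monic := by
  refine monic_prod_of_monic _ _ fun t _ => ?_
  have h : X - C c + (t : ℂ[X]) = X + C ((t : ℂ) - c) := by
    rw [C_sub, ← map_natCast C]; ring
  rw [h]
  exact monic_X_add_C _

lemma denomT_monic (d r : ℕ) (k : ℕ → ℕ) : (denomT d r k).Monic :=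
  monic_prod_of_monic _ _ fun _ _ => monic_prod_of_monic _ _ fun _ _ => pochPoly_monic _ _

lemma denomT_eq_prod_Icc (d r : ℕ) (k : ℕ → ℕ) :
    denomT d r k = ∏ i ∈ Icc 1 r, ∏ j ∈ Icc i r,
      pochPoly (1 + (d : ℂ) * ((i : ℂ) + (j : ℂ) - 2) / 2) (k i + k (j + 1)) := by
  rw [denomT, prod_Icc_succ_top (by omega : 1 ≤ r + 1),
    Icc_eq_empty (by omega : ¬r + 1 + 1 ≤ r + 1), prod_empty, mul_one]
  refine prod_congr rfl fun i _ => ?_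
  rw [← map_add_right_Icc i r 1, prod_map]
  refine prod_congr rfl fun j _ => ?_
  simp only [addRightEmbedding_apply]
  congr 1
  push_cast
  ring

/-- The polynomial `R` with `C̃^d(ν, k) = R(ν)`. -/
noncomputable def quotT (d r : ℕ) (k : ℕ → ℕ) : ℂ[X] :=
  ∏ i ∈ Icc 1 r, ∏ j ∈ Icc i r,
    pochPolyIco (1 + (d : ℂ) * ((i : ℂ) + (j : ℂ) - 2) / 2) (k i + k (j + 1)) (k i + k j)

section Antitone

variable {d r : ℕ} {k : ℕ → ℕ} (hk : ∀ i j, 1 ≤ i → i ≤ j → j ≤ r → k j ≤ k i)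
include hk

lemma apply_le_of_le_of_le_succ (hk0 : k (r + 1) = 0) {i j : ℕ} (hi : 1 ≤ i) (hij : i ≤ j)
    (hj : j ≤ r + 1) : k j ≤ k i := by
  rcases hj.lt_or_eq with hj | rfl
  · exact hk i j hi hij (by omega)
  · omega

lemma quotT_mul_denomT (hk0 : k (r + 1) = 0) : quotT d r k * denomT d r k = numerT d r k := by
  rw [denomT_eq_prod_Icc, quotT, numerT, ← prod_mul_distrib]
  refine prod_congr rfl fun i hi => ?_
  rw [← prod_mul_distrib]
  refine prod_congr rfl fun j hj => ?_
  simp only [mem_Icc] at hi hj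
  have hkj : k (j + 1) ≤ k j := apply_le_of_le_of_le_succ hk hk0 (by omega) (by omega) (by omega)
  rw [mul_comm]
  exact pochPoly_mul_pochPolyIco _ (by omega)

lemma quotT_eq_one (hk0 : k (r + 1) = 0) (hk1 : k 1 = 0) : quotT d r k = 1 := by
  have hzero : ∀ i, 1 ≤ i → i ≤ r + 1 → k i = 0 := fun i hi hir => by
    have := apply_le_of_le_of_le_succ hk hk0 le_rfl hi hir
    omega
  refine prod_eq_one fun i hi => prod_eq_one fun j hj => ?_
  simp only [mem_Icc] at hi hj
  rw [hzero j (by omega) (by omega), hzero (j + 1) (by omega) (by omega), pochPolyIco_self]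

lemma le_of_apply_succ_eq_zero {m j : ℕ} (hkm : k (m + 1) = 0) (hj : j ≤ r) (hkj : 0 < k j) :
    j ≤ m := by
  by_contra! hmj
  have := hk (m + 1) j (by omega) hmj hj
  omega

end Antitone

lemma exists_of_isRoot_quotT {d r : ℕ} {k : ℕ → ℕ} {z : ℂ} (hz : (quotT d r k).IsRoot z) :
    ∃ i j t : ℕ, 1 ≤ i ∧ i ≤ j ∧ j ≤ r ∧ k i + k (j + 1) ≤ t ∧ t < k i + k j ∧
      z = ((1 + (d : ℝ) * ((i : ℝ) + (j : ℝ) - 2) / 2 - (t : ℝ) : ℝ) : ℂ) := by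
  simp only [quotT, IsRoot.def, eval_prod, prod_eq_zero_iff, mem_Icc] at hz
  obtain ⟨i, hi, j, hj, hz⟩ := hz
  obtain ⟨t, ht, rfl⟩ := isRoot_pochPolyIco_iff.mp hz
  rw [mem_Ico] at ht
  exact ⟨i, j, t, hi.1, hj.1, hj.2, ht.1, ht.2, by push_cast; ring⟩

section Roots

variable {d r : ℕ} {k : ℕ → ℕ} {z : ℂ}

lemma im_eq_zero_of_isRoot_quotT (hz : (quotT d r k).IsRoot z) : z.im = 0 := by
  obtain ⟨i, j, t, -, -, -, -, -, rfl⟩ := exists_of_isRoot_quotT hz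
  exact Complex.ofReal_im _

lemma le_re_of_isRoot_quotT (hk : ∀ i j, 1 ≤ i → i ≤ j → j ≤ r → k j ≤ k i) {m₁ : ℕ}
    (hka : ∀ a, 1 ≤ a → a ≤ m₁ → k a = k 1) (hz : (quotT d r k).IsRoot z) :
    (d : ℝ) / 2 * ((m₁ : ℝ) - 1) - 2 * (k 1 : ℝ) + 2 ≤ z.re := by
  obtain ⟨i, j, t, hi, hij, hjr, ht₁, ht₂, rfl⟩ := exists_of_isRoot_quotT hz
  -- below `m₁` the values of `k` are all equal, so the range of `t` would be empty
  have hjm : m₁ ≤ j := by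
    by_contra! hjm
    have := hka j (by omega) hjm.le
    have := hka (j + 1) (by omega) hjm
    omega
  have hki := hk 1 i le_rfl hi (hij.trans hjr)
  have hkj := hk 1 j le_rfl (hi.trans hij) hjr
  have ht : (t : ℝ) + 1 ≤ 2 * (k 1 : ℝ) := by exact_mod_cast (by omega : t + 1 ≤ 2 * k 1)
  have hij' : (m₁ : ℝ) + 1 ≤ i + j := by exact_mod_cast (by omega : m₁ + 1 ≤ i + j)
  have := mul_le_mul_of_nonneg_left (by linarith : (m₁ : ℝ) - 1 ≤ i + j - 2) d.cast_nonneg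
  rw [Complex.ofReal_re]
  linarith

lemma re_le_of_isRoot_quotT (hk : ∀ i j, 1 ≤ i → i ≤ j → j ≤ r → k j ≤ k i) {m₂ : ℕ}
    (hm₂ : m₂ ≤ r) (hkm₂ : k (m₂ + 1) = 0) (hz : (quotT d r k).IsRoot z) :
    z.re ≤ (d : ℝ) * ((m₂ : ℝ) - 1) - (k m₂ : ℝ) + 1 := by
  obtain ⟨i, j, t, hi, hij, hjr, ht₁, ht₂, rfl⟩ := exists_of_isRoot_quotT hz
  have hjm := le_of_apply_succ_eq_zero hk hkm₂ hjr (by omega)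
  have hkj := hk i j hi hij hjr
  have hkm := hk j m₂ (hi.trans hij) hjm hm₂
  have ht : (k m₂ : ℝ) ≤ t := by exact_mod_cast (by omega : k m₂ ≤ t)
  have hij' : (i : ℝ) + j ≤ 2 * m₂ := by exact_mod_cast (by omega : i + j ≤ 2 * m₂)
  have := mul_le_mul_of_nonneg_left (by linarith : (i : ℝ) + j - 2 ≤ 2 * m₂ - 2) d.cast_nonneg
  rw [Complex.ofReal_re]
  linarith

lemma re_lt_of_isRoot_quotT (hd : 0 < d) (hk : ∀ i j, 1 ≤ i → i ≤ j → j ≤ r → k j ≤ k i)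
    {m : ℕ} (hkm : k (m + 1) = 0) (hz : (quotT d r k).IsRoot z) : z.re < d * m := by
  obtain ⟨i, j, t, hi, hij, hjr, ht₁, ht₂, rfl⟩ := exists_of_isRoot_quotT hz
  have hjm := le_of_apply_succ_eq_zero hk hkm hjr (by omega)
  have hkj := hk i j hi hij hjr
  have ht : (1 : ℝ) ≤ t := by exact_mod_cast (by omega : 1 ≤ t)
  have hij' : (i : ℝ) + j ≤ 2 * m := by exact_mod_cast (by omega : i + j ≤ 2 * m)
  have hd' : (1 : ℝ) ≤ d := by exact_mod_cast hd
  have := mul_le_mul_of_nonneg_left (by linarith : (i : ℝ) + j - 2 ≤ 2 * m - 2) d.cast_nonneg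
  rw [Complex.ofReal_re]
  linarith

end Roots

theorem zeroes_tensor_general (d r : ℕ) (hd : 0 < d)
    (k : ℕ → ℕ) (hk : ∀ i j, 1 ≤ i → i ≤ j → j ≤ r → k j ≤ k i)
    (hk0 : k (r + 1) = 0) :
    denomT d r k ∣ numerT d r k ∧
    ∀ R : Polynomial ℂ, R * denomT d r k = numerT d r k →
      ((∀ m₁ m₂ : ℕ, 1 ≤ m₁ → m₁ ≤ m₂ → m₂ ≤ r →
          (∀ a, 1 ≤ a → a ≤ m₁ → k a = k 1) → k (m₂ + 1) = 0 →
          ((1 ≤ k 1 → ∀ z : ℂ, R.IsRoot z → z.im = 0 ∧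
              (d : ℝ) / 2 * ((m₁ : ℝ) - 1) - 2 * (k 1 : ℝ) + 2 ≤ z.re ∧
              z.re ≤ (d : ℝ) * ((m₂ : ℝ) - 1) - (k m₂ : ℝ) + 1) ∧
            (k 1 = 0 → R = 1))) ∧
        ∀ m : ℕ, m < r → k (m + 1) = 0 →
          ∀ lam mu : ℝ, (d : ℝ) * (m : ℝ) / 2 ≤ lam → (d : ℝ) * (m : ℝ) / 2 ≤ mu →
            R.eval ((lam : ℂ) + (mu : ℂ)) ≠ 0) := by
  have hquot := quotT_mul_denomT (d := d) hk hk0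
  refine ⟨⟨quotT d r k, by rw [← hquot, mul_comm]⟩, fun R hR => ?_⟩
  obtain rfl : R = quotT d r k :=
    mul_right_cancel₀ (denomT_monic d r k).ne_zero (hR.trans hquot.symm)
  refine ⟨fun m₁ m₂ _ _ hm₂ hka hkm₂ => ⟨fun _ z hz => ?_, quotT_eq_one hk hk0⟩,
    fun m _ hkm lam mu hlam hmu hz => ?_⟩
  · exact ⟨im_eq_zero_of_isRoot_quotT hz, le_re_of_isRoot_quotT hk hka hz,
      re_le_of_isRoot_quotT hk hm₂ hkm₂ hz⟩
  · have := re_lt_of_isRoot_quotT hd hk hkm hz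
    simp only [Complex.add_re, Complex.ofReal_re] at this
    linarith

/-- Tensor product case: `C̃^d(ν,k)` is a polynomial in `ν`; location of its zeros;
and its nonvanishing at `ν = λ + μ` with `λ, μ ≥ dm/2` when `k_{m+1} = 0`. -/
theorem zeroes_tensor (d r : ℕ) (hd : 0 < d) (hr : 0 < r)
    (k : ℕ → ℕ) (hk : ∀ i j, 1 ≤ i → i ≤ j → j ≤ r → k j ≤ k i)
    (hk0 : k (r + 1) = 0) :
    denomT d r k ∣ numerT d r k ∧
    ∀ R : Polynomial ℂ, R * denomT d r k = numerT d r k →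
      ((∀ m₁ m₂ : ℕ, 1 ≤ m₁ → m₁ ≤ m₂ → m₂ ≤ r →
          (∀ a, 1 ≤ a → a ≤ m₁ → k a = k 1) → k (m₂ + 1) = 0 →
          ((1 ≤ k 1 → ∀ z : ℂ, R.IsRoot z → z.im = 0 ∧
              (d : ℝ) / 2 * ((m₁ : ℝ) - 1) - 2 * (k 1 : ℝ) + 2 ≤ z.re ∧
              z.re ≤ (d : ℝ) * ((m₂ : ℝ) - 1) - (k m₂ : ℝ) + 1) ∧
            (k 1 = 0 → R = 1))) ∧
        ∀ m : ℕ, m < r → k (m + 1) = 0 →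
          ∀ lam mu : ℝ, (d : ℝ) * (m : ℝ) / 2 ≤ lam → (d : ℝ) * (m : ℝ) / 2 ≤ mu →
            R.eval ((lam : ℂ) + (mu : ℂ)) ≠ 0) :=
  zeroes_tensor_general d r hd k hk hk0
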